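/- arXiv:2312.16690 — 2 statements merged into one kernel-verified Lean document; each statement's English description precedes it below -/
import Mathlib

section
/- Let t > 0, σ ∈ ℝ, and p ≥ 1 a natural number. Then |((e^{itσ} − 1)/(it))^p − σ^p| ≤ p · t · |σ|^{p+1} / 2. -/
/-!
Write `a = (e^{itσ} - 1) / (it)`. The first-order bound `|e^{ix} - 1| ≤ |x|` gives `|a| ≤ |σ|`;
integrating it once more gives `|e^{ix} - 1 - ix| ≤ x² / 2`, hence `|a - σ| ≤ t σ² / 2`.
As `a` and `σ` both lie in the disc of radius `|σ|`, the factorisation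
`a^p - σ^p = (a - σ) ∑ a^i σ^(p-1-i)` gives `|a^p - σ^p| ≤ p |σ|^(p-1) |a - σ|`.
-/

open Complex ComplexConjugate

theorem norm_pow_sub_pow_le {R : Type*} [NormedCommRing R] [NormOneClass R] {a b : R} {M : ℝ}
    (ha : ‖a‖ ≤ M) (hb : ‖b‖ ≤ M) (n : ℕ) :
    ‖a ^ n - b ^ n‖ ≤ n * M ^ (n - 1) * ‖a - b‖ := by
  rw [← geom_sum₂_mul]
  refine (norm_mul_le _ _).trans (mul_le_mul_of_nonneg_right ?_ (norm_nonneg _))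
  calc ‖∑ i ∈ Finset.range n, a ^ i * b ^ (n - 1 - i)‖
      ≤ ∑ i ∈ Finset.range n, M ^ (n - 1) := by
        refine norm_sum_le_of_le _ fun i hi => ?_
        have hM : 0 ≤ M := (norm_nonneg a).trans ha
        calc ‖a ^ i * b ^ (n - 1 - i)‖ ≤ M ^ i * M ^ (n - 1 - i) := by
              refine (norm_mul_le _ _).trans ?_
              gcongr
              · exact (norm_pow_le a i).trans (pow_le_pow_left₀ (norm_nonneg a) ha i)
              · exact (norm_pow_le b _).trans (pow_le_pow_left₀ (norm_nonneg b) hb _)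
          _ = M ^ (n - 1) := by
              rw [← pow_add]
              congr 1
              have := Finset.mem_range.mp hi
              omega
    _ = n * M ^ (n - 1) := by simp

theorem norm_exp_I_mul_ofReal_sub_one_sub_of_nonneg {x : ℝ} (hx : 0 ≤ x) :
    ‖exp (I * x) - 1 - I * x‖ ≤ x ^ 2 / 2 := by
  have hf : ∀ s : ℝ, HasDerivAt (fun s : ℝ => exp (I * s) - 1 - I * s)
      (I * (exp (I * s) - 1)) s := fun s => by
    have hId : HasDerivAt (fun s : ℝ => I * (s : ℂ)) I s := by
      simpa using (ofRealCLM.hasDerivAt (x := s)).const_mul I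
    exact ((hId.cexp.sub_const 1).sub hId).congr_deriv (by ring)
  have hB : ∀ s : ℝ, HasDerivAt (fun s : ℝ => s ^ 2 / 2) s s := fun s =>
    ((hasDerivAt_pow 2 s).div_const 2).congr_deriv (by norm_num)
  -- `s ↦ s² / 2` is a barrier: its derivative `s` dominates `‖I (e^{is} - 1)‖ ≤ s`.
  refine image_norm_le_of_norm_deriv_right_le_deriv_boundary
    (fun s _ => (hf s).continuousAt.continuousWithinAt) (fun s _ => (hf s).hasDerivWithinAt)
    (by simp) hB (fun s hs => ?_) ⟨hx, le_rfl⟩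
  rw [norm_mul, norm_I, one_mul]
  exact Real.norm_exp_I_mul_ofReal_sub_one_le.trans_eq (Real.norm_of_nonneg hs.1)

theorem norm_exp_I_mul_ofReal_sub_one_sub_le (x : ℝ) :
    ‖exp (I * x) - 1 - I * x‖ ≤ x ^ 2 / 2 := by
  rcases le_total 0 x with hx | hx
  · exact norm_exp_I_mul_ofReal_sub_one_sub_of_nonneg hx
  · have h_conj : conj (exp (I * x) - 1 - I * x) = exp (I * ↑(-x)) - 1 - I * ↑(-x) := by
      simp [← exp_conj, sub_eq_add_neg]
    rw [← norm_conj, h_conj, ← neg_sq]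
    exact norm_exp_I_mul_ofReal_sub_one_sub_of_nonneg (neg_nonneg.mpr hx)

theorem norm_exp_I_mul_sub_one_div_le (t σ : ℝ) :
    ‖(exp (I * t * σ) - 1) / (I * t)‖ ≤ |σ| := by
  rw [norm_div, norm_mul, norm_I, one_mul, norm_real, Real.norm_eq_abs]
  refine div_le_of_le_mul₀ (abs_nonneg t) (abs_nonneg σ) ?_
  have h := Real.norm_exp_I_mul_ofReal_sub_one_le (x := t * σ)
  rwa [ofReal_mul, ← mul_assoc, Real.norm_eq_abs, abs_mul, mul_comm |t|] at h

theorem norm_exp_I_mul_sub_one_div_sub_le {t : ℝ} (ht : t ≠ 0) (σ : ℝ) :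
    ‖(exp (I * t * σ) - 1) / (I * t) - σ‖ ≤ |t| * σ ^ 2 / 2 := by
  have hIt : I * t ≠ 0 := mul_ne_zero I_ne_zero (ofReal_ne_zero.mpr ht)
  have h_eq : (exp (I * t * σ) - 1) / (I * t) - σ =
      (exp (I * ↑(t * σ)) - 1 - I * ↑(t * σ)) / (I * t) := by
    rw [ofReal_mul, ← mul_assoc, eq_div_iff hIt, sub_mul, div_mul_cancel₀ _ hIt]
    ring
  rw [h_eq, norm_div, norm_mul, norm_I, one_mul, norm_real, Real.norm_eq_abs,
    div_le_iff₀ (abs_pos.mpr ht)]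
  calc _ ≤ (t * σ) ^ 2 / 2 := norm_exp_I_mul_ofReal_sub_one_sub_le (t * σ)
    _ = |t| * σ ^ 2 / 2 * |t| := by rw [mul_pow, ← sq_abs t]; ring

theorem filter_function_power_bound_general (t σ : ℝ) (ht : 0 < t) (p : ℕ) :
    ‖((Complex.exp (Complex.I * (t : ℂ) * (σ : ℂ)) - 1) / (Complex.I * (t : ℂ))) ^ p -
        (σ : ℂ) ^ p‖ ≤ (p : ℝ) * t * |σ| ^ (p + 1) / 2 := by
  calc _ ≤ p * |σ| ^ (p - 1) * ‖(exp (I * t * σ) - 1) / (I * t) - σ‖ :=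
        norm_pow_sub_pow_le (norm_exp_I_mul_sub_one_div_le t σ) (by simp) p
    _ ≤ p * |σ| ^ (p - 1) * (|t| * σ ^ 2 / 2) := by
        gcongr
        exact norm_exp_I_mul_sub_one_div_sub_le ht.ne' σ
    _ = p * t * |σ| ^ (p + 1) / 2 := by
        rw [abs_of_pos ht, ← sq_abs σ]
        rcases p with _ | p
        · simp
        · push_cast
          ring

theorem filter_function_power_bound (t σ : ℝ) (ht : 0 < t) (p : ℕ) (hp : 1 ≤ p) :
    ‖((Complex.exp (Complex.I * (t : ℂ) * (σ : ℂ)) - 1) / (Complex.I * (t : ℂ))) ^ p -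
        (σ : ℂ) ^ p‖ ≤ (p : ℝ) * t * |σ| ^ (p + 1) / 2 :=
  filter_function_power_bound_general t σ ht p
end

section
/- Let d ≥ 1 be an integer and let s > d/2 be a real number. Then there exists a constant C > 0, depending only on s and d, such that for all u, v : ℤ^d → ℂ with Σ_{k∈ℤ^d} (1+‖k‖²)^s |u_k|² < ∞ and Σ_{k∈ℤ^d} (1+‖k‖²)^s |v_k|² < ∞, the convolution (u*v)_k = Σ_{k₁ + k₂ = k} u_{k₁} v_{k₂} is well defined (the series converges absolutely for every k) and satisfies Σ_{k∈ℤ^d} (1+‖k‖²)^s |(u*v)_k|² ≤ C² · (Σ_{k∈ℤ^d} (1+‖k‖²)^s |u_k|²) · (Σ_{k∈ℤ^d} (1+‖k‖²)^s |v_k|²). -/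
/-!
The weight `ω k = (1 + ‖k‖²) ^ (s / 2)` satisfies Peetre's inequality
`ω (a + b) ≤ 2 ^ s (ω a + ω b)`, so `ω · (u ∗ v)` is dominated pointwise by
`(ω u) ∗ v + u ∗ (ω v)`. Young's inequality bounds each term by `‖ω u‖₂ ‖v‖₁` resp.
`‖u‖₁ ‖ω v‖₂`, and Cauchy–Schwarz gives `‖u‖₁² ≤ (∑ ω⁻²) ‖ω u‖₂²`, where `∑ ω⁻²` is finite
precisely because `2 s > d`. All estimates are made for `ℝ≥0∞`-valued sums, where nothing has
to be checked to be summable, and are transported back to `ℝ` at the end.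
-/

/-- The embedding of `ℤ^d` into the Euclidean space `ℝ^d`. -/
noncomputable def intVec {d : ℕ} (k : Fin d → ℤ) : EuclideanSpace ℝ (Fin d) :=
  WithLp.toLp 2 (fun i => (k i : ℝ))

open scoped ENNReal NNReal

namespace ENNReal

theorem two_mul_le_add_sq (a b : ℝ≥0∞) : 2 * a * b ≤ a ^ 2 + b ^ 2 := by
  rcases eq_top_or_lt_top a with rfl | ha
  · simp
  rcases eq_top_or_lt_top b with rfl | hb
  · simp
  lift a to ℝ≥0 using ha.ne
  lift b to ℝ≥0 using hb.ne
  exact_mod_cast _root_.two_mul_le_add_sq a b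

theorem add_sq_le (a b : ℝ≥0∞) : (a + b) ^ 2 ≤ 2 * (a ^ 2 + b ^ 2) :=
  calc (a + b) ^ 2 = a ^ 2 + b ^ 2 + 2 * a * b := by ring
    _ ≤ a ^ 2 + b ^ 2 + (a ^ 2 + b ^ 2) := by gcongr; exact two_mul_le_add_sq a b
    _ = 2 * (a ^ 2 + b ^ 2) := by ring

theorem sq_tsum_mul_le {ι : Type*} (f h : ι → ℝ≥0∞) :
    (∑' i, f i * h i) ^ 2 ≤ (∑' i, h i) * ∑' i, f i ^ 2 * h i := by
  have key : ∀ i j, 2 * (f i * h i * (f j * h j)) ≤ f i ^ 2 * h i * h j + h i * (f j ^ 2 * h j) :=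
    fun i j => calc
      2 * (f i * h i * (f j * h j)) = 2 * f i * f j * (h i * h j) := by ring
      _ ≤ (f i ^ 2 + f j ^ 2) * (h i * h j) := by gcongr; exact two_mul_le_add_sq _ _
      _ = f i ^ 2 * h i * h j + h i * (f j ^ 2 * h j) := by ring
  rw [← ENNReal.mul_le_mul_iff_right two_ne_zero ofNat_ne_top]
  calc 2 * (∑' i, f i * h i) ^ 2 = ∑' i, ∑' j, 2 * (f i * h i * (f j * h j)) := by
        simp_rw [ENNReal.tsum_mul_left, ENNReal.tsum_mul_right, sq]
    _ ≤ ∑' i, ∑' j, (f i ^ 2 * h i * h j + h i * (f j ^ 2 * h j)) :=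
        ENNReal.tsum_le_tsum fun i => ENNReal.tsum_le_tsum fun j => key i j
    _ = 2 * ((∑' i, h i) * ∑' i, f i ^ 2 * h i) := by
        simp_rw [ENNReal.tsum_add, ENNReal.tsum_mul_left, ENNReal.tsum_mul_right]
        ring

theorem sq_tsum_le_tsum_inv_sq_mul {ι : Type*} (w F : ι → ℝ≥0∞) (hw₀ : ∀ i, w i ≠ 0)
    (hw : ∀ i, w i ≠ ∞) :
    (∑' i, F i) ^ 2 ≤ (∑' i, (w i)⁻¹ ^ 2) * ∑' i, (w i * F i) ^ 2 := by
  have hcancel : ∀ i, w i ^ 2 * (w i)⁻¹ ^ 2 = 1 := fun i => by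
    rw [← mul_pow, ENNReal.mul_inv_cancel (hw₀ i) (hw i), one_pow]
  calc (∑' i, F i) ^ 2 = (∑' i, w i ^ 2 * F i * (w i)⁻¹ ^ 2) ^ 2 := by
        simp_rw [mul_right_comm _ (F _), hcancel, one_mul]
    _ ≤ (∑' i, (w i)⁻¹ ^ 2) * ∑' i, (w i ^ 2 * F i) ^ 2 * (w i)⁻¹ ^ 2 := sq_tsum_mul_le _ _
    _ = (∑' i, (w i)⁻¹ ^ 2) * ∑' i, (w i * F i) ^ 2 := by
        congr 1
        refine tsum_congr fun i => ?_
        calc (w i ^ 2 * F i) ^ 2 * (w i)⁻¹ ^ 2 = (w i * F i) ^ 2 * (w i ^ 2 * (w i)⁻¹ ^ 2) := by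
              ring
          _ = (w i * F i) ^ 2 := by rw [hcancel, mul_one]

theorem ofReal_tsum_sq_mul_norm_sq {ι E : Type*} [SeminormedAddGroup E] (ω : ι → ℝ)
    (hω : ∀ k, 0 ≤ ω k) (u : ι → E) (hu : Summable fun k => ω k ^ 2 * ‖u k‖ ^ 2) :
    ENNReal.ofReal (∑' k, ω k ^ 2 * ‖u k‖ ^ 2) = ∑' k, (ENNReal.ofReal (ω k) * ‖u k‖ₑ) ^ 2 := by
  rw [ENNReal.ofReal_tsum_of_nonneg (fun _ => by positivity) hu]
  refine tsum_congr fun k => ?_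
  rw [mul_pow, ENNReal.ofReal_mul (by positivity), ENNReal.ofReal_pow (hω k),
    ENNReal.ofReal_pow (norm_nonneg _), ofReal_norm]

theorem ofReal_tsum_inv_sq {ι : Type*} (ω : ι → ℝ) (hω : ∀ k, 0 < ω k)
    (hK : Summable fun k => (ω k)⁻¹ ^ 2) :
    ENNReal.ofReal (∑' k, (ω k)⁻¹ ^ 2) = ∑' k, (ENNReal.ofReal (ω k))⁻¹ ^ 2 := by
  rw [ENNReal.ofReal_tsum_of_nonneg (fun _ => by positivity) hK]
  refine tsum_congr fun k => ?_
  rw [ENNReal.ofReal_pow (inv_nonneg.2 (hω k).le), ENNReal.ofReal_inv_of_pos (hω k)]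

end ENNReal

namespace WeightedConvolution

variable {G : Type*} [AddCommGroup G]

noncomputable def conv (f g : G → ℝ≥0∞) (k : G) : ℝ≥0∞ := ∑' j, f j * g (k - j)

theorem tsum_comp_sub_left {M : Type*} [AddCommMonoid M] [TopologicalSpace M] (h : G → M)
    (k : G) : ∑' j, h (k - j) = ∑' j, h j :=
  (Equiv.subLeft k).tsum_eq h

theorem tsum_comp_sub_right {M : Type*} [AddCommMonoid M] [TopologicalSpace M] (h : G → M)
    (j : G) : ∑' k, h (k - j) = ∑' k, h k :=
  (Equiv.subRight j).tsum_eq h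

theorem conv_comm (f g : G → ℝ≥0∞) : conv f g = conv g f := by
  funext k
  rw [conv, ← (Equiv.subLeft k).tsum_eq]
  simp only [conv, Equiv.subLeft_apply, sub_sub_cancel, mul_comm]

theorem tsum_conv_sq_le (f h : G → ℝ≥0∞) :
    ∑' k, conv f h k ^ 2 ≤ (∑' j, h j) ^ 2 * ∑' j, f j ^ 2 :=
  calc ∑' k, conv f h k ^ 2 ≤ ∑' k, (∑' j, h (k - j)) * ∑' j, f j ^ 2 * h (k - j) :=
        ENNReal.tsum_le_tsum fun k => ENNReal.sq_tsum_mul_le _ _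
    _ = (∑' j, h j) * ∑' j, f j ^ 2 * ∑' k, h (k - j) := by
        simp_rw [tsum_comp_sub_left h, ENNReal.tsum_mul_left]
        rw [ENNReal.tsum_comm]
        simp_rw [ENNReal.tsum_mul_left]
    _ = (∑' j, h j) ^ 2 * ∑' j, f j ^ 2 := by
        simp_rw [tsum_comp_sub_right h, ENNReal.tsum_mul_right]
        ring

theorem mul_conv_le (w f g : G → ℝ≥0∞) {c : ℝ≥0∞} (hw : ∀ a b, w (a + b) ≤ c * (w a + w b))
    (k : G) : w k * conv f g k ≤ c * (conv (w * f) g k + conv f (w * g) k) := by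
  simp only [conv, ← ENNReal.tsum_mul_left, ← ENNReal.tsum_add]
  refine ENNReal.tsum_le_tsum fun j => ?_
  have hk : w k ≤ c * (w j + w (k - j)) := by simpa using hw j (k - j)
  calc w k * (f j * g (k - j)) ≤ c * (w j + w (k - j)) * (f j * g (k - j)) := by gcongr
    _ = c * ((w * f) j * g (k - j) + f j * (w * g) (k - j)) := by simp only [Pi.mul_apply]; ring

theorem tsum_mul_conv_sq_le (w f g : G → ℝ≥0∞) {c : ℝ≥0∞}
    (hw : ∀ a b, w (a + b) ≤ c * (w a + w b)) (hw₀ : ∀ k, w k ≠ 0) (hw_top : ∀ k, w k ≠ ∞) :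
    ∑' k, (w k * conv f g k) ^ 2 ≤
      4 * c ^ 2 * (∑' k, (w k)⁻¹ ^ 2) * (∑' k, (w k * f k) ^ 2) * ∑' k, (w k * g k) ^ 2 := by
  set K := ∑' k, (w k)⁻¹ ^ 2
  set A := ∑' k, (w k * f k) ^ 2
  set B := ∑' k, (w k * g k) ^ 2
  have hX : ∑' k, conv (w * f) g k ^ 2 ≤ K * B * A := (tsum_conv_sq_le _ _).trans
    (mul_le_mul_left (ENNReal.sq_tsum_le_tsum_inv_sq_mul w g hw₀ hw_top) _)
  have hY : ∑' k, conv f (w * g) k ^ 2 ≤ K * A * B := by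
    rw [conv_comm]
    exact (tsum_conv_sq_le _ _).trans
      (mul_le_mul_left (ENNReal.sq_tsum_le_tsum_inv_sq_mul w f hw₀ hw_top) _)
  calc ∑' k, (w k * conv f g k) ^ 2
      ≤ ∑' k, c ^ 2 * (2 * (conv (w * f) g k ^ 2 + conv f (w * g) k ^ 2)) :=
        ENNReal.tsum_le_tsum fun k => by
          grw [mul_conv_le w f g hw k, mul_pow, ENNReal.add_sq_le]
    _ = 2 * c ^ 2 * (∑' k, conv (w * f) g k ^ 2 + ∑' k, conv f (w * g) k ^ 2) := by
        rw [ENNReal.tsum_mul_left, ENNReal.tsum_mul_left, ENNReal.tsum_add]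
        ring
    _ ≤ 2 * c ^ 2 * (K * B * A + K * A * B) := by gcongr
    _ = 4 * c ^ 2 * K * A * B := by ring

theorem summable_norm_mul_and_norm_tsum_le {R : Type*} [NormedRing R] (u v : G → R) (k : G)
    (h : conv (‖u ·‖ₑ) (‖v ·‖ₑ) k ≠ ∞) :
    Summable (fun j => ‖u j * v (k - j)‖) ∧
      ‖∑' j, u j * v (k - j)‖ ≤ (conv (‖u ·‖ₑ) (‖v ·‖ₑ) k).toReal := by
  have hprod : Summable fun j => ‖u j‖ * ‖v (k - j)‖ := by
    simpa only [ENNReal.toReal_mul, toReal_enorm] using ENNReal.summable_toReal h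
  have hsum : Summable fun j => ‖u j * v (k - j)‖ :=
    hprod.of_nonneg_of_le (fun _ => norm_nonneg _) fun _ => norm_mul_le _ _
  refine ⟨hsum, ?_⟩
  calc ‖∑' j, u j * v (k - j)‖ ≤ ∑' j, ‖u j * v (k - j)‖ := norm_tsum_le_tsum_norm hsum
    _ ≤ ∑' j, ‖u j‖ * ‖v (k - j)‖ := hsum.tsum_le_tsum (fun _ => norm_mul_le _ _) hprod
    _ = (conv (‖u ·‖ₑ) (‖v ·‖ₑ) k).toReal := by
        rw [conv, ENNReal.tsum_toReal_eq fun _ => ENNReal.mul_ne_top enorm_ne_top enorm_ne_top]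
        simp only [ENNReal.toReal_mul, toReal_enorm]

theorem tsum_ofReal_mul_conv_enorm_sq_le {R : Type*} [NormedRing R] (ω : G → ℝ)
    (hω : ∀ k, 0 < ω k) {c : ℝ≥0} (hω_add : ∀ a b, ω (a + b) ≤ c * (ω a + ω b))
    (hK : Summable fun k => (ω k)⁻¹ ^ 2) {u v : G → R}
    (hu : Summable fun k => ω k ^ 2 * ‖u k‖ ^ 2) (hv : Summable fun k => ω k ^ 2 * ‖v k‖ ^ 2) :
    ∑' k, (ENNReal.ofReal (ω k) * conv (‖u ·‖ₑ) (‖v ·‖ₑ) k) ^ 2 ≤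
      ENNReal.ofReal (4 * c ^ 2 * (∑' k, (ω k)⁻¹ ^ 2) * (∑' k, ω k ^ 2 * ‖u k‖ ^ 2) *
        ∑' k, ω k ^ 2 * ‖v k‖ ^ 2) := by
  have hw : ∀ a b, ENNReal.ofReal (ω (a + b)) ≤
      c * (ENNReal.ofReal (ω a) + ENNReal.ofReal (ω b)) := fun a b => by
    rw [← ENNReal.ofReal_coe_nnreal, ← ENNReal.ofReal_add (hω a).le (hω b).le,
      ← ENNReal.ofReal_mul c.coe_nonneg]
    exact ENNReal.ofReal_le_ofReal (hω_add a b)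
  have hS := tsum_mul_conv_sq_le _ (‖u ·‖ₑ) (‖v ·‖ₑ) hw
    (fun k => (ENNReal.ofReal_pos.2 (hω k)).ne') fun _ => ENNReal.ofReal_ne_top
  have hc : ENNReal.ofReal (4 * c ^ 2) = 4 * c ^ 2 := by
    rw [ENNReal.ofReal_mul (by norm_num), ENNReal.ofReal_pow c.coe_nonneg,
      ENNReal.ofReal_coe_nnreal, ENNReal.ofReal_ofNat]
  rwa [ENNReal.ofReal_mul (by positivity), ENNReal.ofReal_mul (by positivity),
    ENNReal.ofReal_mul (by positivity), hc, ENNReal.ofReal_tsum_inv_sq ω hω hK,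
    ENNReal.ofReal_tsum_sq_mul_norm_sq ω (fun k => (hω k).le) u hu,
    ENNReal.ofReal_tsum_sq_mul_norm_sq ω (fun k => (hω k).le) v hv]

theorem summable_weighted_conv_and_tsum_le {R : Type*} [NormedRing R] (ω : G → ℝ)
    (hω : ∀ k, 0 < ω k) {c : ℝ≥0} (hω_add : ∀ a b, ω (a + b) ≤ c * (ω a + ω b))
    (hK : Summable fun k => (ω k)⁻¹ ^ 2) {u v : G → R}
    (hu : Summable fun k => ω k ^ 2 * ‖u k‖ ^ 2) (hv : Summable fun k => ω k ^ 2 * ‖v k‖ ^ 2) :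
    (∀ k, Summable fun j => ‖u j * v (k - j)‖) ∧
      Summable (fun k => ω k ^ 2 * ‖∑' j, u j * v (k - j)‖ ^ 2) ∧
      ∑' k, ω k ^ 2 * ‖∑' j, u j * v (k - j)‖ ^ 2 ≤
        4 * c ^ 2 * (∑' k, (ω k)⁻¹ ^ 2) * (∑' k, ω k ^ 2 * ‖u k‖ ^ 2) *
          ∑' k, ω k ^ 2 * ‖v k‖ ^ 2 := by
  set F := conv (‖u ·‖ₑ) (‖v ·‖ₑ)
  set T : G → ℝ≥0∞ := fun k => (ENNReal.ofReal (ω k) * F k) ^ 2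
  have hT := tsum_ofReal_mul_conv_enorm_sq_le ω hω hω_add hK hu hv
  have hT_top : ∑' k, T k ≠ ∞ := ne_top_of_le_ne_top ENNReal.ofReal_ne_top hT
  have hT_ne : ∀ k, T k ≠ ∞ := fun k => ne_top_of_le_ne_top hT_top (ENNReal.le_tsum k)
  have hF : ∀ k, F k ≠ ∞ := fun k hk => by
    simpa [T, hk, ENNReal.mul_top (ENNReal.ofReal_pos.2 (hω k)).ne'] using hT_ne k
  have hconv := fun k => summable_norm_mul_and_norm_tsum_le u v k (hF k)
  have hbound : ∀ k, ω k ^ 2 * ‖∑' j, u j * v (k - j)‖ ^ 2 ≤ (T k).toReal := fun k => by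
    rw [ENNReal.toReal_pow, ENNReal.toReal_mul, ENNReal.toReal_ofReal (hω k).le, mul_pow]
    gcongr
    exact (hconv k).2
  have hT_sum : Summable fun k => (T k).toReal := ENNReal.summable_toReal hT_top
  have hsum := hT_sum.of_nonneg_of_le (fun k => by positivity) hbound
  refine ⟨fun k => (hconv k).1, hsum, ?_⟩
  calc ∑' k, ω k ^ 2 * ‖∑' j, u j * v (k - j)‖ ^ 2 ≤ ∑' k, (T k).toReal :=
        hsum.tsum_le_tsum hbound hT_sum
    _ = (∑' k, T k).toReal := (ENNReal.tsum_toReal_eq hT_ne).symm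
    _ ≤ _ := ENNReal.toReal_le_of_le_ofReal (by positivity) hT

end WeightedConvolution

theorem intVec_add {d : ℕ} (a b : Fin d → ℤ) : intVec (a + b) = intVec a + intVec b := by
  ext i
  simp [intVec]

theorem intVec_injective (d : ℕ) : Function.Injective (intVec (d := d)) := fun a b h => by
  funext i
  simpa [intVec] using congrArg (· i) h

theorem intVec_mem_span_basisFun {d : ℕ} (k : Fin d → ℤ) :
    intVec k ∈ Submodule.span ℤ (Set.range (EuclideanSpace.basisFun (Fin d) ℝ).toBasis) := by
  have : intVec k = ∑ i, k i • (EuclideanSpace.basisFun (Fin d) ℝ).toBasis i := by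
    ext j
    simp [intVec, Pi.single_apply]
  rw [this]
  exact Submodule.sum_mem _ fun i _ => Submodule.smul_mem _ _ (Submodule.subset_span ⟨i, rfl⟩)

theorem summable_norm_intVec_rpow {d : ℕ} {r : ℝ} (hr : r < -d) :
    Summable fun k : Fin d → ℤ => ‖intVec k‖ ^ r := by
  let L := Submodule.span ℤ (Set.range (EuclideanSpace.basisFun (Fin d) ℝ).toBasis)
  have hL : Summable fun z : L => ‖z‖ ^ r :=
    ZLattice.summable_norm_rpow L r (by rwa [ZLattice.rank ℝ L, finrank_euclideanSpace_fin])
  have hi : Function.Injective fun k => (⟨intVec k, intVec_mem_span_basisFun k⟩ : L) :=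
    fun a b h => intVec_injective d (congrArg Subtype.val h)
  have h := hL.comp_injective hi
  simp only [Function.comp_def] at h
  exact h

theorem summable_one_add_norm_intVec_sq_rpow_neg {d : ℕ} {s : ℝ} (hs : (d : ℝ) / 2 < s) :
    Summable fun k : Fin d → ℤ => (1 + ‖intVec k‖ ^ 2) ^ (-s) := by
  refine summable_of_isBigO (summable_norm_intVec_rpow (r := 2 * -s) (by linarith)) ?_
  refine Asymptotics.IsBigO.of_bound 1 ?_
  filter_upwards [Filter.eventually_cofinite_ne 0] with k hk
  have hpos : 0 < ‖intVec k‖ :=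
    norm_pos_iff.mpr fun h => hk (intVec_injective d (h.trans (by ext; simp [intVec])))
  have hs0 : 0 ≤ s := le_trans (by positivity) hs.le
  rw [one_mul, Real.norm_of_nonneg (by positivity), Real.norm_of_nonneg (by positivity),
    Real.rpow_mul hpos.le, Real.rpow_two]
  exact Real.rpow_le_rpow_of_nonpos (by positivity) (by linarith) (by linarith)

theorem one_add_norm_add_sq_rpow_le {E : Type*} [SeminormedAddCommGroup E] {t : ℝ} (ht : 0 ≤ t)
    (x y : E) : (1 + ‖x + y‖ ^ 2) ^ t ≤ 4 ^ t * ((1 + ‖x‖ ^ 2) ^ t + (1 + ‖y‖ ^ 2) ^ t) := by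
  have h : 1 + ‖x + y‖ ^ 2 ≤ 4 * max (1 + ‖x‖ ^ 2) (1 + ‖y‖ ^ 2) := by
    have : ‖x + y‖ ^ 2 ≤ (‖x‖ + ‖y‖) ^ 2 := by gcongr; exact norm_add_le x y
    nlinarith [sq_nonneg (‖x‖ - ‖y‖), le_max_left (1 + ‖x‖ ^ 2) (1 + ‖y‖ ^ 2),
      le_max_right (1 + ‖x‖ ^ 2) (1 + ‖y‖ ^ 2)]
  calc (1 + ‖x + y‖ ^ 2) ^ t ≤ (4 * max (1 + ‖x‖ ^ 2) (1 + ‖y‖ ^ 2)) ^ t := by gcongr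
    _ = 4 ^ t * max ((1 + ‖x‖ ^ 2) ^ t) ((1 + ‖y‖ ^ 2) ^ t) := by
        rw [Real.mul_rpow (by norm_num) (by positivity),
          Real.rpow_max (by positivity) (by positivity) ht]
    _ ≤ 4 ^ t * ((1 + ‖x‖ ^ 2) ^ t + (1 + ‖y‖ ^ 2) ^ t) := by
        gcongr
        exact max_le_add_of_nonneg (by positivity) (by positivity)

theorem rpow_div_two_sq {x : ℝ} (hx : 0 ≤ x) (s : ℝ) : (x ^ (s / 2)) ^ 2 = x ^ s := by
  rw [← Real.rpow_natCast, ← Real.rpow_mul hx]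
  norm_num

theorem sobolev_algebra_fourier_general (d : ℕ) (s : ℝ) (hs : (d : ℝ) / 2 < s) :
    ∃ C : ℝ, 0 < C ∧ ∀ u v : (Fin d → ℤ) → ℂ,
      Summable (fun k : Fin d → ℤ => (1 + ‖intVec k‖ ^ 2) ^ s * ‖u k‖ ^ 2) →
      Summable (fun k : Fin d → ℤ => (1 + ‖intVec k‖ ^ 2) ^ s * ‖v k‖ ^ 2) →
      (∀ k : Fin d → ℤ, Summable fun k₁ : Fin d → ℤ => ‖u k₁ * v (k - k₁)‖) ∧
      Summable (fun k : Fin d → ℤ =>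
        (1 + ‖intVec k‖ ^ 2) ^ s * ‖∑' k₁ : Fin d → ℤ, u k₁ * v (k - k₁)‖ ^ 2) ∧
      ∑' k : Fin d → ℤ,
          (1 + ‖intVec k‖ ^ 2) ^ s * ‖∑' k₁ : Fin d → ℤ, u k₁ * v (k - k₁)‖ ^ 2 ≤
        C ^ 2 * (∑' k : Fin d → ℤ, (1 + ‖intVec k‖ ^ 2) ^ s * ‖u k‖ ^ 2) *
          (∑' k : Fin d → ℤ, (1 + ‖intVec k‖ ^ 2) ^ s * ‖v k‖ ^ 2) := by
  have hs0 : 0 ≤ s := le_trans (by positivity) hs.le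
  set ω : (Fin d → ℤ) → ℝ := fun k => (1 + ‖intVec k‖ ^ 2) ^ (s / 2)
  have hω : ∀ k, 0 < ω k := fun k => by positivity
  have hω_sq : ∀ k, ω k ^ 2 = (1 + ‖intVec k‖ ^ 2) ^ s :=
    fun k => rpow_div_two_sq (by positivity) s
  have hω_inv_sq : ∀ k, (ω k)⁻¹ ^ 2 = (1 + ‖intVec k‖ ^ 2) ^ (-s) := fun k => by
    rw [inv_pow, hω_sq, Real.rpow_neg (by positivity)]
  set c : ℝ≥0 := 4 ^ (s / 2)
  have hω_add : ∀ a b, ω (a + b) ≤ c * (ω a + ω b) := fun a b => by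
    simpa [ω, c, intVec_add] using
      one_add_norm_add_sq_rpow_le (by positivity) (intVec a) (intVec b)
  have hK : Summable fun k => (ω k)⁻¹ ^ 2 := by
    simpa only [hω_inv_sq] using summable_one_add_norm_intVec_sq_rpow_neg hs
  have hK_pos : 0 < ∑' k, (ω k)⁻¹ ^ 2 := hK.tsum_pos (fun k => by positivity) 0 (by positivity)
  refine ⟨2 * c * √(∑' k, (ω k)⁻¹ ^ 2), by positivity, fun u v hu hv => ?_⟩
  have h := WeightedConvolution.summable_weighted_conv_and_tsum_le ω hω hω_add hK
    (by simpa only [hω_sq] using hu) (by simpa only [hω_sq] using hv)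
  simp only [hω_sq] at h
  rwa [mul_pow, mul_pow, Real.sq_sqrt hK_pos.le, show (2 : ℝ) ^ 2 = 4 by norm_num]

theorem sobolev_algebra_fourier (d : ℕ) (hd : 1 ≤ d) (s : ℝ) (hs : (d : ℝ) / 2 < s) :
    ∃ C : ℝ, 0 < C ∧ ∀ u v : (Fin d → ℤ) → ℂ,
      Summable (fun k : Fin d → ℤ => (1 + ‖intVec k‖ ^ 2) ^ s * ‖u k‖ ^ 2) →
      Summable (fun k : Fin d → ℤ => (1 + ‖intVec k‖ ^ 2) ^ s * ‖v k‖ ^ 2) →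
      (∀ k : Fin d → ℤ, Summable fun k₁ : Fin d → ℤ => ‖u k₁ * v (k - k₁)‖) ∧
      Summable (fun k : Fin d → ℤ =>
        (1 + ‖intVec k‖ ^ 2) ^ s * ‖∑' k₁ : Fin d → ℤ, u k₁ * v (k - k₁)‖ ^ 2) ∧
      ∑' k : Fin d → ℤ,
          (1 + ‖intVec k‖ ^ 2) ^ s * ‖∑' k₁ : Fin d → ℤ, u k₁ * v (k - k₁)‖ ^ 2 ≤
        C ^ 2 * (∑' k : Fin d → ℤ, (1 + ‖intVec k‖ ^ 2) ^ s * ‖u k‖ ^ 2) *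
          (∑' k : Fin d → ℤ, (1 + ‖intVec k‖ ^ 2) ^ s * ‖v k‖ ^ 2) :=
  sobolev_algebra_fourier_general d s hs
end
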